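/- Let P be a finite set of points in general position in the plane, let G be a geometric graph with vertex set P, and let f be a nonzero affine functional on ℝ² whose zero line contains at least one point of P. Set Q⁻ = {p ∈ P : f(p) ≤ 0} and Q⁺ = {p ∈ P : f(p) ≥ 0}. If the induced geometric subgraph of G on Q⁻ has a plane spanning tree and the induced geometric subgraph of G on Q⁺ has a plane spanning tree, then G has a plane spanning tree (the union of the two trees is a connected plane spanning subgraph of G). -/

import Mathlib

open Real

/-- Points of the Euclidean plane. -/
abbrev Pt : Type := ℝ × ℝ

/-- A point set is in general position if no three distinct points of it are collinear. -/
def GenPos (Q : Set Pt) : Prop :=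
  ∀ u ∈ Q, ∀ v ∈ Q, ∀ w ∈ Q,
    u ≠ v → u ≠ w → v ≠ w → ¬ Collinear ℝ ({u, v, w} : Set Pt)

/-- All edges of the graph `G` join points of `Q`:  `G` is a geometric graph
with vertex set (contained in) `Q`. -/
def EdgesIn (G : SimpleGraph Pt) (Q : Set Pt) : Prop :=
  ∀ ⦃a b : Pt⦄, G.Adj a b → a ∈ Q ∧ b ∈ Q

/-- The straight-line drawing of `T` is plane (non-self intersecting): the closed
segments of two distinct edges intersect in at most a common endpoint. -/
def IsPlane (T : SimpleGraph Pt) : Prop :=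
  ∀ ⦃a b c d : Pt⦄, T.Adj a b → T.Adj c d → ({a, b} : Set Pt) ≠ ({c, d} : Set Pt) →
    segment ℝ a b ∩ segment ℝ c d ⊆ ({a, b} : Set Pt) ∩ ({c, d} : Set Pt)

/-- The induced geometric subgraph of `G` on the point set `Q`, viewed again as a
graph on the whole plane. -/
def induceOn (G : SimpleGraph Pt) (Q : Set Pt) : SimpleGraph Pt where
  Adj a b := G.Adj a b ∧ a ∈ Q ∧ b ∈ Q
  symm := ⟨fun a b ⟨h, ha, hb⟩ => ⟨h.symm, hb, ha⟩⟩
  loopless := ⟨fun a ⟨h, _, _⟩ => G.ne_of_adj h rfl⟩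

/-- `G` (a geometric graph with vertex set `Q`) has a plane spanning tree: a subgraph
`T` of `G`, with all edges inside `Q`, whose straight-line drawing is plane and whose
induced graph on `Q` is a tree (in particular it is connected, i.e. spanning). -/
def HasPlaneSpanningTree (Q : Set Pt) (G : SimpleGraph Pt) : Prop :=
  ∃ T : SimpleGraph Pt, T ≤ G ∧ EdgesIn T Q ∧ IsPlane T ∧ (T.induce Q).IsTree

/-- `u, v, w` are three distinct points of `Q` forming an empty triangle of the point
set `Q`: no point of `Q` lies in the interior of the convex hull of `{u, v, w}`. -/
def EmptyTri (Q : Set Pt) (u v w : Pt) : Prop :=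
  u ∈ Q ∧ v ∈ Q ∧ w ∈ Q ∧ u ≠ v ∧ u ≠ w ∧ v ≠ w ∧
    ∀ p ∈ Q, p ∉ interior (convexHull ℝ ({u, v, w} : Set Pt))

/-- `u, v, w` is a disconnected empty triangle of the geometric graph `G` on point set
`Q` : it is an empty triangle of `Q` and the subgraph of `G` induced by `{u, v, w}` is
not connected. -/
def DiscTri (Q : Set Pt) (G : SimpleGraph Pt) (u v w : Pt) : Prop :=
  EmptyTri Q u v w ∧ ¬ (G.induce ({u, v, w} : Set Pt)).Connected

/-- `sG Q G` is the number of disconnected empty triangles of the geometric graph `G`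
with vertex set `Q` (triangles counted as unordered triples of points). -/
noncomputable def sG (Q : Set Pt) (G : SimpleGraph Pt) : ℕ :=
  {t : Set Pt | ∃ u v w, t = {u, v, w} ∧ DiscTri Q G u v w}.ncard

section aux
open SimpleGraph

lemma reachable_delete_aux {V : Type*} {G : SimpleGraph V} {u v : V}
    (huv : (G \ fromEdgeSet {s(u,v)}).Reachable u v) :
    ∀ {a b : V}, G.Reachable a b → (G \ fromEdgeSet {s(u,v)}).Reachable a b := by
  intro a b hab
  obtain ⟨w⟩ := hab
  induction w with
  | nil => exact Reachable.refl _
  | @cons a c b h p ih =>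
    refine Reachable.trans ?_ ih
    by_cases he : s(a, c) = s(u, v)
    · rw [Sym2.eq_iff] at he
      rcases he with ⟨rfl, rfl⟩ | ⟨rfl, rfl⟩
      · exact huv
      · exact huv.symm
    · exact Adj.reachable ⟨h, by simp [fromEdgeSet_adj, he]⟩

lemma exists_tree_le' {V : Type*} [Fintype V] :
    ∀ (n : ℕ) (G : SimpleGraph V), G.edgeSet.ncard ≤ n → G.Connected →
      ∃ T, T ≤ G ∧ T.IsTree := by
  intro n
  induction n with
  | zero =>
    intro G hcard hconn
    have : G.edgeSet = ∅ := by
      have := G.edgeSet.toFinite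
      rw [← Set.ncard_eq_zero this]
      omega
    refine ⟨G, le_refl _, hconn, ?_⟩
    intro v c hc
    have hG : G = ⊥ := edgeSet_eq_empty.mp this
    subst hG
    exact isAcyclic_bot c hc
  | succ n ih =>
    intro G hcard hconn
    by_cases hac : G.IsAcyclic
    · exact ⟨G, le_refl _, hconn, hac⟩
    · simp only [IsAcyclic, not_forall, not_not] at hac
      obtain ⟨v, c, hc⟩ := hac
      cases c with
      | nil => exact absurd hc (by simp [Walk.isCycle_def])
      | @cons _ u _ ha p =>
        have he : s(v, u) ∈ (Walk.cons ha p).edges := by simp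
        have hkey := adj_and_reachable_delete_edges_iff_exists_cycle.mpr
          ⟨v, Walk.cons ha p, hc, he⟩
        obtain ⟨hadj, hreach⟩ := hkey
        set G' := G \ fromEdgeSet {s(v, u)} with hG'
        have hconn' : G'.Connected := by
          haveI := hconn.nonempty
          exact Connected.mk fun a b =>
            reachable_delete_aux hreach (hconn.preconnected a b)
        have hss : G'.edgeSet ⊂ G.edgeSet := by
          constructor
          · exact edgeSet_mono sdiff_le
          · intro hsub
            have h1 : s(v, u) ∈ G.edgeSet := hadj
            have h2 : s(v, u) ∉ G'.edgeSet := by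
              simp only [hG', edgeSet_sdiff, Set.mem_diff, mem_edgeSet]
              intro hx
              exact hx.2 ⟨rfl, hadj.ne⟩
            exact h2 (hsub h1)
        have hcard' : G'.edgeSet.ncard ≤ n := by
          have := Set.ncard_lt_ncard hss G.edgeSet.toFinite
          omega
        obtain ⟨T, hle, hT⟩ := ih G' hcard' hconn'
        exact ⟨T, hle.trans sdiff_le, hT⟩

end aux

lemma collinear_zero_set (f : Pt →ᵃ[ℝ] ℝ) (hf : f.linear ≠ 0)
    {s : Set Pt} (hs : ∀ p ∈ s, f p = 0) : Collinear ℝ s := by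
  have hker : vectorSpan ℝ s ≤ LinearMap.ker f.linear := by
    rw [vectorSpan_def, Submodule.span_le]
    rintro x hx
    obtain ⟨p, hp, q, hq, rfl⟩ := Set.mem_sub.mp hx
    have h := f.linearMap_vsub p q
    rw [SetLike.mem_coe, LinearMap.mem_ker]
    have : (p -ᵥ q : Pt) = p - q := rfl
    rw [← this, h, hs p hp, hs q hq, vsub_eq_sub, sub_self]
  have hrange : 1 ≤ Module.finrank ℝ (LinearMap.range f.linear) := by
    rw [Nat.one_le_iff_ne_zero]
    intro h0
    have : LinearMap.range f.linear = ⊥ := Submodule.finrank_eq_zero.mp h0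
    exact hf (LinearMap.range_eq_bot.mp this)
  have hdim : Module.finrank ℝ (LinearMap.range f.linear)
      + Module.finrank ℝ (LinearMap.ker f.linear) = Module.finrank ℝ Pt :=
    LinearMap.finrank_range_add_finrank_ker f.linear
  have hPt : Module.finrank ℝ Pt = 2 := by
    simp [Module.finrank_prod]
  have hker1 : Module.finrank ℝ (LinearMap.ker f.linear) ≤ 1 := by omega
  rw [collinear_iff_finrank_le_one]
  exact le_trans (Submodule.finrank_mono hker) hker1

lemma comb_zero {t s A B : ℝ} (ht : 0 ≤ t) (hs : 0 ≤ s)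
    (hA : A ≤ 0) (hB : B ≤ 0) (h : t * A + s * B = 0) (hne : ¬(A = 0 ∧ B = 0)) :
    t = 0 ∨ s = 0 := by
  have h1 : t * A ≤ 0 := mul_nonpos_of_nonneg_of_nonpos ht hA
  have h2 : s * B ≤ 0 := mul_nonpos_of_nonneg_of_nonpos hs hB
  have h3 : t * A = 0 := by linarith
  have h4 : s * B = 0 := by linarith
  rcases mul_eq_zero.mp h3 with h | h
  · exact Or.inl h
  · rcases mul_eq_zero.mp h4 with h' | h'
    · exact Or.inr h'
    · exact absurd ⟨h, h'⟩ hne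

lemma seg_hit_neg (f : Pt →ᵃ[ℝ] ℝ) {a b x : Pt}
    (ha : f a ≤ 0) (hb : f b ≤ 0) (hx : x ∈ segment ℝ a b) (hfx : f x = 0)
    (hne : ¬(f a = 0 ∧ f b = 0)) : x = a ∨ x = b := by
  obtain ⟨t, s, ht, hs, hts, hcomb⟩ := hx
  have hfc : t * f a + s * f b = 0 := by
    have := Convex.combo_affine_apply (f := f) (x := a) (y := b) hts
    rw [hcomb] at this
    simpa [smul_eq_mul, hfx] using this.symm
  rcases comb_zero ht hs ha hb hfc hne with h | h
  · right; rw [← hcomb, h]; simp; rw [show s = 1 by linarith]; simp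
  · left; rw [← hcomb, h]; simp; rw [show t = 1 by linarith]; simp

lemma seg_hit_pos (f : Pt →ᵃ[ℝ] ℝ) {a b x : Pt}
    (ha : 0 ≤ f a) (hb : 0 ≤ f b) (hx : x ∈ segment ℝ a b) (hfx : f x = 0)
    (hne : ¬(f a = 0 ∧ f b = 0)) : x = a ∨ x = b := by
  obtain ⟨t, s, ht, hs, hts, hcomb⟩ := hx
  have hfc : t * f a + s * f b = 0 := by
    have := Convex.combo_affine_apply (f := f) (x := a) (y := b) hts
    rw [hcomb] at this
    simpa [smul_eq_mul, hfx] using this.symm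
  have hfc' : t * (-(f a)) + s * (-(f b)) = 0 := by ring_nf; linarith [hfc]
  have hne' : ¬(-(f a) = 0 ∧ -(f b) = 0) := by
    intro ⟨h1, h2⟩; exact hne ⟨by linarith, by linarith⟩
  rcases comb_zero ht hs (by linarith) (by linarith) hfc' hne' with h | h
  · right; rw [← hcomb, h]; simp; rw [show s = 1 by linarith]; simp
  · left; rw [← hcomb, h]; simp; rw [show t = 1 by linarith]; simp

lemma on_line_pair {P : Set Pt} (hgp : GenPos P) (f : Pt →ᵃ[ℝ] ℝ)
    (hf : f.linear ≠ 0) {x c d : Pt} (hx : x ∈ P) (hc : c ∈ P) (hd : d ∈ P)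
    (hcd : c ≠ d) (h0x : f x = 0) (h0c : f c = 0) (h0d : f d = 0) :
    x = c ∨ x = d := by
  by_cases h1 : x = c
  · exact Or.inl h1
  by_cases h2 : x = d
  · exact Or.inr h2
  exfalso
  apply hgp x hx c hc d hd h1 h2 hcd
  apply collinear_zero_set f hf
  rintro p (rfl | rfl | rfl) <;> assumption

lemma mem_pair {x a b : Pt} (h : x = a ∨ x = b) : x ∈ ({a, b} : Set Pt) := by
  rcases h with rfl | rfl <;> simp

lemma mixed_plane {P : Set Pt} (hgp : GenPos P) (f : Pt →ᵃ[ℝ] ℝ)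
    (hf : f.linear ≠ 0) {a b c d : Pt}
    (haP : a ∈ P) (hbP : b ∈ P) (hcP : c ∈ P) (hdP : d ∈ P)
    (hab : a ≠ b) (hcd : c ≠ d)
    (hfa : f a ≤ 0) (hfb : f b ≤ 0) (hfc : 0 ≤ f c) (hfd : 0 ≤ f d)
    (hne : ({a, b} : Set Pt) ≠ ({c, d} : Set Pt)) :
    segment ℝ a b ∩ segment ℝ c d ⊆ ({a, b} : Set Pt) ∩ ({c, d} : Set Pt) := by
  rintro x ⟨hx1, hx2⟩
  -- f x = 0
  have hfx : f x = 0 := by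
    obtain ⟨t, s, ht, hs, hts, hcomb⟩ := hx1
    obtain ⟨t', s', ht', hs', hts', hcomb'⟩ := hx2
    have e1 : f x = t * f a + s * f b := by
      have := Convex.combo_affine_apply (f := f) (x := a) (y := b) hts
      rw [hcomb] at this; simpa [smul_eq_mul] using this
    have e2 : f x = t' * f c + s' * f d := by
      have := Convex.combo_affine_apply (f := f) (x := c) (y := d) hts'
      rw [hcomb'] at this; simpa [smul_eq_mul] using this
    have u1 : t * f a ≤ 0 := mul_nonpos_of_nonneg_of_nonpos ht hfa
    have u2 : s * f b ≤ 0 := mul_nonpos_of_nonneg_of_nonpos hs hfb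
    have u3 : 0 ≤ t' * f c := mul_nonneg ht' hfc
    have u4 : 0 ≤ s' * f d := mul_nonneg hs' hfd
    linarith
  by_cases hA : f a = 0 ∧ f b = 0
  · by_cases hC : f c = 0 ∧ f d = 0
    · -- all four on the line; contradiction
      exfalso
      have hcab : c = a ∨ c = b :=
        on_line_pair hgp f hf hcP haP hbP hab hC.1 hA.1 hA.2
      have hdab : d = a ∨ d = b :=
        on_line_pair hgp f hf hdP haP hbP hab hC.2 hA.1 hA.2
      apply hne
      rcases hcab with rfl | rfl <;> rcases hdab with rfl | rfl <;>
        first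
          | exact absurd rfl hcd
          | rfl
          | exact Set.pair_comm _ _
    · -- x ∈ {c, d}, then x on line with a b
      have hxcd : x = c ∨ x = d := seg_hit_pos f hfc hfd hx2 hfx hC
      have hxP : x ∈ P := by rcases hxcd with rfl | rfl <;> assumption
      have hxab : x = a ∨ x = b :=
        on_line_pair hgp f hf hxP haP hbP hab hfx hA.1 hA.2
      exact ⟨mem_pair hxab, mem_pair hxcd⟩
  · have hxab : x = a ∨ x = b := seg_hit_neg f hfa hfb hx1 hfx hA
    by_cases hC : f c = 0 ∧ f d = 0
    · have hxP : x ∈ P := by rcases hxab with rfl | rfl <;> assumption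
      have hxcd : x = c ∨ x = d :=
        on_line_pair hgp f hf hxP hcP hdP hcd hfx hC.1 hC.2
      exact ⟨mem_pair hxab, mem_pair hxcd⟩
    · have hxcd : x = c ∨ x = d := seg_hit_pos f hfc hfd hx2 hfx hC
      exact ⟨mem_pair hxab, mem_pair hxcd⟩


/-- gluing trees along a line. Let `P` be in general position,
`G` a geometric graph with vertex set `P`, and `f` a nonzero affine functional whose
zero line contains a point of `P`. If the induced geometric subgraphs of `G` on
`Q⁻ = {p ∈ P | f p ≤ 0}` and on `Q⁺ = {p ∈ P | f p ≥ 0}` both have plane spanning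
trees, then `G` has a plane spanning tree. -/
theorem glue_plane_spanning_trees
    (P : Finset Pt) (hgp : GenPos ↑P)
    (G : SimpleGraph Pt) (hG : EdgesIn G ↑P)
    (f : Pt →ᵃ[ℝ] ℝ) (hf : f.linear ≠ 0) (hzero : ∃ v ∈ P, f v = 0)
    (hm : HasPlaneSpanningTree {p ∈ (↑P : Set Pt) | f p ≤ 0}
      (induceOn G {p ∈ (↑P : Set Pt) | f p ≤ 0}))
    (hp : HasPlaneSpanningTree {p ∈ (↑P : Set Pt) | 0 ≤ f p}
      (induceOn G {p ∈ (↑P : Set Pt) | 0 ≤ f p})) :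
    HasPlaneSpanningTree ↑P G := by
  classical
  obtain ⟨z, hzP, hz0⟩ := hzero
  obtain ⟨T1, hT1G, hT1E, hT1P, hT1tree⟩ := hm
  obtain ⟨T2, hT2G, hT2E, hT2P, hT2tree⟩ := hp
  set Qm : Set Pt := {p ∈ (↑P : Set Pt) | f p ≤ 0} with hQm
  set Qp : Set Pt := {p ∈ (↑P : Set Pt) | 0 ≤ f p} with hQp
  set U : SimpleGraph Pt := T1 ⊔ T2 with hU
  have hT1le : T1 ≤ G := fun a b h => by obtain ⟨h', -⟩ := hT1G h; exact h'
  have hT2le : T2 ≤ G := fun a b h => by obtain ⟨h', -⟩ := hT2G h; exact h'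
  have hUG : U ≤ G := sup_le hT1le hT2le
  have hUplane : IsPlane U := by
    intro a b c d hab hcd hne
    rcases (SimpleGraph.sup_adj _ _ _ _).mp hab with hab' | hab' <;>
      rcases (SimpleGraph.sup_adj _ _ _ _).mp hcd with hcd' | hcd'
    · exact hT1P hab' hcd' hne
    · obtain ⟨⟨haP, hfa⟩, ⟨hbP, hfb⟩⟩ := hT1E hab'
      obtain ⟨⟨hcP, hfc⟩, ⟨hdP, hfd⟩⟩ := hT2E hcd'
      exact mixed_plane hgp f hf haP hbP hcP hdP hab'.ne hcd'.ne hfa hfb hfc hfd hne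
    · obtain ⟨⟨haP, hfa⟩, ⟨hbP, hfb⟩⟩ := hT2E hab'
      obtain ⟨⟨hcP, hfc⟩, ⟨hdP, hfd⟩⟩ := hT1E hcd'
      intro x hx
      have h := mixed_plane hgp f hf hcP hdP haP hbP hcd'.ne hab'.ne hfc hfd hfa hfb
        (fun hEq => hne hEq.symm) ⟨hx.2, hx.1⟩
      exact ⟨h.2, h.1⟩
    · exact hT2P hab' hcd' hne
  have hzQm : z ∈ Qm := ⟨hzP, le_of_eq hz0⟩
  have hzQp : z ∈ Qp := ⟨hzP, ge_of_eq hz0⟩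
  let φ₁ : (T1.induce Qm) →g (U.induce (↑P : Set Pt)) :=
    ⟨fun w => ⟨w.1, w.2.1⟩, fun h => (SimpleGraph.sup_adj _ _ _ _).mpr (Or.inl h)⟩
  let φ₂ : (T2.induce Qp) →g (U.induce (↑P : Set Pt)) :=
    ⟨fun w => ⟨w.1, w.2.1⟩, fun h => (SimpleGraph.sup_adj _ _ _ _).mpr (Or.inr h)⟩
  have hreach : ∀ v : (↑P : Set Pt), (U.induce (↑P : Set Pt)).Reachable v ⟨z, hzP⟩ := by
    intro v
    rcases le_total (f ↑v) 0 with hv | hv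
    · have hvQm : (↑v : Pt) ∈ Qm := ⟨v.2, hv⟩
      exact (hT1tree.isConnected.preconnected ⟨↑v, hvQm⟩ ⟨z, hzQm⟩).map φ₁
    · have hvQp : (↑v : Pt) ∈ Qp := ⟨v.2, hv⟩
      exact (hT2tree.isConnected.preconnected ⟨↑v, hvQp⟩ ⟨z, hzQp⟩).map φ₂
  have hUconn : (U.induce (↑P : Set Pt)).Connected := by
    haveI : Nonempty ((↑P : Set Pt) : Type) := ⟨⟨z, hzP⟩⟩
    exact SimpleGraph.Connected.mk fun a b => (hreach a).trans (hreach b).symm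
  obtain ⟨T', hT'le, hT'tree⟩ :=
    exists_tree_le' ((U.induce (↑P : Set Pt)).edgeSet.ncard) (U.induce (↑P : Set Pt))
      le_rfl hUconn
  refine ⟨{ Adj := fun a b => ∃ (ha : a ∈ (↑P : Set Pt)) (hb : b ∈ (↑P : Set Pt)),
              T'.Adj ⟨a, ha⟩ ⟨b, hb⟩
            symm := ⟨by rintro a b ⟨ha, hb, h⟩; exact ⟨hb, ha, h.symm⟩⟩
            loopless := ⟨by rintro a ⟨ha, ha', h⟩; exact T'.irrefl h⟩ }, ?_, ?_, ?_, ?_⟩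
  · rintro a b ⟨ha, hb, h⟩
    exact hUG (hT'le h)
  · rintro a b ⟨ha, hb, h⟩
    exact ⟨ha, hb⟩
  · intro a b c d hab hcd hne
    obtain ⟨ha, hb, h1⟩ := hab
    obtain ⟨hc, hd, h2⟩ := hcd
    exact hUplane (hT'le h1) (hT'le h2) hne
  · have hEq : SimpleGraph.induce (↑P : Set Pt)
        { Adj := fun a b => ∃ (ha : a ∈ (↑P : Set Pt)) (hb : b ∈ (↑P : Set Pt)),
            T'.Adj ⟨a, ha⟩ ⟨b, hb⟩
          symm := ⟨by rintro a b ⟨ha, hb, h⟩; exact ⟨hb, ha, h.symm⟩⟩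
          loopless := ⟨by rintro a ⟨ha, ha', h⟩; exact T'.irrefl h⟩ } = T' := by
      ext a b
      constructor
      · rintro ⟨ha, hb, h⟩
        exact h
      · intro h
        exact ⟨a.2, b.2, h⟩
    rw [hEq]
    exact hT'tree
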